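/- Fix m > 0 and let ω(x) = √(m x φ(x/m)). Let T > 0, K ≥ 0, and let y : [0,T] → [0,∞) be continuous and satisfy y(t) ≤ K ∫₀^t s^{−1/2} ω(y(s)) ds for all t ∈ [0,T]. Then y(t) = 0 for every t ∈ [0,T]. -/

import Mathlib

/-!
Since `ω(m e^{-w}) = m e^{-w} w` for `w ≥ 1 + √2`, the barriers
`u_v(s) = m exp(-v e^{-2K√s})` solve `u' = K s^{-1/2} ω(u)` exactly on `[0, T]` once
`v e^{-2K√T} ≥ 1 + √2`. As `ω` is nondecreasing, `y` cannot reach `u_v` for the first time,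
because up to that time `y ≤ K ∫ s^{-1/2} ω(y) ≤ K ∫ s^{-1/2} ω(u_v) < u_v`. Hence
`y(t) < u_v(t) ≤ m exp(-v e^{-2K√T})`, which tends to `0` as `v → ∞`.
-/

open Real Set MeasureTheory
open scoped ENNReal

noncomputable section

/-- The concave modulus `φ` from the paper: `φ(x) = x (log x)²` for
`x ≤ e^{-1-√2}` (with `φ(0) = 0`, using `log 0 = 0`), and
`φ(x) = x + 2(1+√2)e^{-1-√2}` beyond the junction point. -/
def phi (x : ℝ) : ℝ :=
  if x ≤ Real.exp (-1 - Real.sqrt 2) then x * Real.log x ^ 2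
  else x + 2 * (1 + Real.sqrt 2) * Real.exp (-1 - Real.sqrt 2)

/-- The modulus `ω(x) = √(m x φ(x/m))` associated with mass `m`. -/
def omega (m x : ℝ) : ℝ := Real.sqrt (m * x * phi (x / m))

theorem hasDerivAt_mul_log_sq {x : ℝ} (hx : x ≠ 0) :
    HasDerivAt (fun x => x * log x ^ 2) (log x * (log x + 2)) x := by
  have h : HasDerivAt (fun x => x * log x ^ 2) (1 * log x ^ 2 + x * (2 * log x ^ 1 * x⁻¹)) x :=
    (hasDerivAt_id x).mul ((hasDerivAt_log hx).pow 2)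
  convert h using 1
  field_simp

theorem monotoneOn_mul_log_sq : MonotoneOn (fun x => x * log x ^ 2) (Icc 0 (exp (-2))) := by
  have hpos : MonotoneOn (fun x => x * log x ^ 2) (Ioc 0 (exp (-2))) := by
    refine monotoneOn_of_hasDerivWithinAt_nonneg (convex_Ioc _ _)
      (continuousOn_id.mul ((continuousOn_log.mono fun x hx => hx.1.ne').pow 2))
      (fun x hx => (hasDerivAt_mul_log_sq (interior_subset hx).1.ne').hasDerivWithinAt) ?_
    intro x hx
    rw [interior_Ioc] at hx
    obtain ⟨hx0, hx⟩ := hx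
    have hlog : log x < -2 := (log_lt_iff_lt_exp hx0).2 hx
    nlinarith
  rintro a ⟨ha0, -⟩ b hb hab
  rcases ha0.eq_or_lt with rfl | ha
  · simp only [zero_mul]
    positivity
  · exact hpos ⟨ha, hab.trans hb.2⟩ ⟨ha.trans_le hab, hb.2⟩ hab

theorem phi_nonneg {x : ℝ} (hx : 0 ≤ x) : 0 ≤ phi x := by
  unfold phi
  split_ifs <;> positivity

theorem phi_monotoneOn : MonotoneOn phi (Ici 0) := by
  set c := exp (-1 - √2)
  have hc : c ∈ Icc 0 (exp (-2)) :=
    ⟨(exp_pos _).le, exp_le_exp.2 (by linarith [one_lt_sqrt_two])⟩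
  have hjunction : c * log c ^ 2 = c + 2 * (1 + √2) * c := by
    rw [log_exp]
    linear_combination c * sq_sqrt (zero_le_two : (0 : ℝ) ≤ 2)
  intro a ha b hb hab
  unfold phi
  split_ifs with hac hbc hbc
  · exact monotoneOn_mul_log_sq ⟨ha, hac.trans hc.2⟩ ⟨hb, hbc.trans hc.2⟩ hab
  · calc a * log a ^ 2 ≤ c * log c ^ 2 := monotoneOn_mul_log_sq ⟨ha, hac.trans hc.2⟩ hc hac
      _ ≤ _ := by rw [hjunction]; linarith
  · exact absurd (hab.trans hbc) hac
  · linarith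

theorem measurable_phi : Measurable phi :=
  Measurable.ite (measurableSet_le measurable_id measurable_const)
    (measurable_id.mul (measurable_log.pow_const 2)) (measurable_id.add_const _)

theorem omega_nonneg (m x : ℝ) : 0 ≤ omega m x := sqrt_nonneg _

theorem omega_monotoneOn {m : ℝ} (hm : 0 < m) : MonotoneOn (omega m) (Ici 0) := by
  intro a ha b hb hab
  have ha' : (0 : ℝ) ≤ a / m := div_nonneg ha hm.le
  refine sqrt_le_sqrt (mul_le_mul (by gcongr) ?_ (phi_nonneg ha') (mul_nonneg hm.le hb))
  exact phi_monotoneOn ha' (div_nonneg hb hm.le) (by gcongr)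

theorem measurable_omega (m : ℝ) : Measurable (omega m) := by
  unfold omega
  have := measurable_phi
  fun_prop

theorem omega_mul_exp_neg {m w : ℝ} (hm : 0 < m) (hw : 1 + √2 ≤ w) :
    omega m (m * exp (-w)) = m * exp (-w) * w := by
  have hw0 : 0 ≤ w := by linarith [sqrt_nonneg 2]
  have hbranch : exp (-w) ≤ exp (-1 - √2) := exp_le_exp.2 (by linarith)
  rw [omega, mul_div_cancel_left₀ _ hm.ne', phi, if_pos hbranch, log_exp,
    show m * (m * exp (-w)) * (exp (-w) * (-w) ^ 2) = (m * exp (-w) * w) ^ 2 by ring,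
    sqrt_sq (by positivity)]

theorem lt_of_le_integral_of_integral_lt {w F y u : ℝ → ℝ} {T : ℝ}
    (hw : ∀ s ∈ Ioo 0 T, 0 ≤ w s) (hF : MonotoneOn F (Ici 0))
    (hy : ContinuousOn y (Icc 0 T)) (hu : ContinuousOn u (Icc 0 T))
    (hy_nonneg : ∀ t ∈ Icc 0 T, 0 ≤ y t)
    (hy_int : ∀ t ∈ Icc 0 T, IntervalIntegrable (fun s => w s * F (y s)) volume 0 t)
    (hu_int : ∀ t ∈ Icc 0 T, IntervalIntegrable (fun s => w s * F (u s)) volume 0 t)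
    (hy_sub : ∀ t ∈ Icc 0 T, y t ≤ ∫ s in 0..t, w s * F (y s))
    (hu_super : ∀ t ∈ Icc 0 T, ∫ s in 0..t, w s * F (u s) < u t) :
    ∀ t ∈ Icc 0 T, y t < u t := by
  by_contra! hcross
  obtain ⟨t₁, ht₁, hyu₁⟩ := hcross
  set S := {t ∈ Icc 0 T | u t ≤ y t}
  have hS : IsClosed S := isClosed_Icc.isClosed_le hu hy
  have hS_bdd : BddBelow S := ⟨0, fun t ht => ht.1.1⟩
  set t₀ := sInf S
  obtain ⟨ht₀, hyu₀⟩ : t₀ ∈ S := hS.csInf_mem ⟨t₁, ht₁, hyu₁⟩ hS_bdd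
  have hbefore : ∀ s ∈ Ioo 0 t₀, w s * F (y s) ≤ w s * F (u s) := by
    intro s hs
    have hsT : s ∈ Icc 0 T := ⟨hs.1.le, hs.2.le.trans ht₀.2⟩
    have hys : y s < u s := lt_of_not_ge fun h => (csInf_le hS_bdd ⟨hsT, h⟩).not_gt hs.2
    exact mul_le_mul_of_nonneg_left (hF (hy_nonneg s hsT) (hy_nonneg s hsT |>.trans hys.le)
      hys.le) (hw s ⟨hs.1, hs.2.trans_le ht₀.2⟩)
  have := intervalIntegral.integral_mono_on_of_le_Ioo ht₀.1 (hy_int t₀ ht₀) (hu_int t₀ ht₀)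
    hbefore
  linarith [hy_sub t₀ ht₀, hu_super t₀ ht₀]

theorem IntervalIntegrable.mul_of_bdd {w g : ℝ → ℝ} {a b C : ℝ} (hab : a ≤ b)
    (hw : IntervalIntegrable w volume a b) (hg : AEStronglyMeasurable g (volume.restrict (Ioc a b)))
    (hC : ∀ s ∈ Ioc a b, ‖g s‖ ≤ C) : IntervalIntegrable (fun s => w s * g s) volume a b := by
  rw [intervalIntegrable_iff_integrableOn_Ioc_of_le hab] at hw ⊢
  exact hw.mul_bdd hg ((ae_restrict_iff' measurableSet_Ioc).2 (.of_forall hC))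

theorem intervalIntegrable_inv_sqrt {t : ℝ} (ht : 0 ≤ t) :
    IntervalIntegrable (fun s => (√s)⁻¹) volume 0 t := by
  have hrpow : IntervalIntegrable (fun s : ℝ => s ^ (-(1 / 2) : ℝ)) volume 0 t :=
    intervalIntegral.intervalIntegrable_rpow' (by norm_num)
  rw [intervalIntegrable_iff_integrableOn_Ioc_of_le ht] at hrpow ⊢
  refine hrpow.congr_fun (fun s hs => ?_) measurableSet_Ioc
  rw [sqrt_eq_rpow, ← rpow_neg hs.1.le]

theorem intervalIntegrable_inv_sqrt_mul_omega {m K T C : ℝ} (hm : 0 < m) {g : ℝ → ℝ}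
    (hg : ContinuousOn g (Icc 0 T)) (hg_nonneg : ∀ s ∈ Icc 0 T, 0 ≤ g s)
    (hgC : ∀ s ∈ Icc 0 T, g s ≤ C) :
    ∀ t ∈ Icc 0 T, IntervalIntegrable (fun s => K * (√s)⁻¹ * omega m (g s)) volume 0 t := by
  intro t ht
  have hsub : Ioc 0 t ⊆ Icc 0 T := fun s hs => ⟨hs.1.le, hs.2.trans ht.2⟩
  refine ((intervalIntegrable_inv_sqrt ht.1).const_mul K).mul_of_bdd ht.1
    ((measurable_omega m).comp_aemeasurable ((hg.mono hsub).aemeasurable measurableSet_Ioc)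
      |>.aestronglyMeasurable) (C := omega m C) fun s hs => ?_
  have hgs := hg_nonneg s (hsub hs)
  rw [norm_of_nonneg (omega_nonneg m _)]
  exact omega_monotoneOn hm hgs (hgs.trans (hgC s (hsub hs))) (hgC s (hsub hs))

open Filter Topology

def barrier (m K v s : ℝ) : ℝ := m * exp (-(v * exp (-(2 * K * √s))))

section barrier

variable {m K v : ℝ}

theorem continuous_barrier : Continuous (barrier m K v) := by
  unfold barrier
  fun_prop

theorem barrier_pos (hm : 0 < m) (s : ℝ) : 0 < barrier m K v s := by
  unfold barrier
  positivity

theorem barrier_le (hm : 0 ≤ m) (hv : 0 ≤ v) (s : ℝ) : barrier m K v s ≤ m := by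
  unfold barrier
  exact mul_le_of_le_one_right hm (exp_le_one_iff.2 (by simp only [neg_nonpos]; positivity))

theorem barrier_le_barrier (hm : 0 ≤ m) (hK : 0 ≤ K) (hv : 0 ≤ v) {s t : ℝ} (hst : s ≤ t) :
    barrier m K v s ≤ barrier m K v t := by
  unfold barrier
  gcongr

theorem hasDerivAt_barrier {s : ℝ} (hs : 0 < s) :
    HasDerivAt (barrier m K v)
      (K * (√s)⁻¹ * (barrier m K v s * (v * exp (-(2 * K * √s))))) s := by
  have h := (((hasDerivAt_sqrt hs.ne').const_mul (2 * K)).neg.exp.const_mul v).neg.exp.const_mul m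
  unfold barrier
  refine h.congr_deriv ?_
  simp only [Pi.neg_apply]
  field_simp

theorem barrier_eq_add_integral (hm : 0 < m) (hK : 0 ≤ K) (hv : 0 ≤ v) {T t : ℝ}
    (hvT : 1 + √2 ≤ v * exp (-(2 * K * √T))) (ht : t ∈ Icc 0 T) :
    barrier m K v t = barrier m K v 0 + ∫ s in 0..t, K * (√s)⁻¹ * omega m (barrier m K v s) := by
  have homega : ∀ s ∈ Icc 0 T,
      omega m (barrier m K v s) = barrier m K v s * (v * exp (-(2 * K * √s))) := by
    intro s hs
    exact omega_mul_exp_neg hm (hvT.trans (by gcongr; exact hs.2))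
  have hFTC : ∫ s in 0..t, K * (√s)⁻¹ * omega m (barrier m K v s)
      = barrier m K v t - barrier m K v 0 := by
    refine intervalIntegral.integral_eq_sub_of_hasDeriv_right_of_le ht.1
      continuous_barrier.continuousOn (fun s hs => ?_)
      (intervalIntegrable_inv_sqrt_mul_omega hm continuous_barrier.continuousOn
        (fun s _ => (barrier_pos hm s).le) (fun s _ => barrier_le hm.le hv s) t ht)
    rw [homega s ⟨hs.1.le, hs.2.le.trans ht.2⟩]
    exact (hasDerivAt_barrier hs.1).hasDerivWithinAt
  linarith

theorem tendsto_barrier_atTop (m K T : ℝ) :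
    Tendsto (fun v => barrier m K v T) atTop (𝓝 0) := by
  have h := tendsto_neg_atTop_atBot.comp
    (tendsto_id.atTop_mul_const (exp_pos (-(2 * K * √T))))
  simpa [barrier] using (tendsto_exp_atBot.comp h).const_mul m

end barrier

theorem osgood_vanishing_weighted_general (m : ℝ) (hm : 0 < m) (T K : ℝ)
    (hK : 0 ≤ K) (y : ℝ → ℝ)
    (hc : ContinuousOn y (Set.Icc 0 T))
    (hnn : ∀ t ∈ Set.Icc 0 T, 0 ≤ y t)
    (hineq : ∀ t ∈ Set.Icc 0 T,
      y t ≤ K * ∫ s in (0:ℝ)..t, (Real.sqrt s)⁻¹ * omega m (y s)) :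
    ∀ t ∈ Set.Icc 0 T, y t = 0 := by
  obtain ⟨Y, hY⟩ := isCompact_Icc.bddAbove_image hc
  have hy_int := intervalIntegrable_inv_sqrt_mul_omega (K := K) hm hc hnn
    fun s hs => hY (mem_image_of_mem y hs)
  have hy_sub : ∀ t ∈ Icc 0 T, y t ≤ ∫ s in 0..t, K * (√s)⁻¹ * omega m (y s) := by
    simpa only [mul_assoc, intervalIntegral.integral_const_mul] using hineq
  intro t ht
  refine le_antisymm (ge_of_tendsto (tendsto_barrier_atTop m K T) ?_) (hnn t ht)
  filter_upwards [eventually_ge_atTop 0,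
    eventually_ge_atTop ((1 + √2) / exp (-(2 * K * √T)))] with v hv hvT
  rw [div_le_iff₀ (exp_pos _)] at hvT
  have hu := (continuous_barrier (m := m) (K := K) (v := v)).continuousOn (s := Icc 0 T)
  have hy_lt := lt_of_le_integral_of_integral_lt (fun s _ => by positivity)
    (omega_monotoneOn hm) hc hu hnn hy_int
    (intervalIntegrable_inv_sqrt_mul_omega hm hu (fun s _ => (barrier_pos hm s).le)
      fun s _ => barrier_le hm.le hv s) hy_sub
    fun s hs => by
      linarith [barrier_eq_add_integral hm hK hv hvT hs, barrier_pos hm (K := K) (v := v) 0]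
  exact (hy_lt t ht).le.trans (barrier_le_barrier hm.le hK hv ht.2)

/-- Osgood uniqueness lemma with the singular weight
`s^{-1/2}`. If a continuous nonnegative function `y` on `[0,T]` satisfies
`y(t) ≤ K ∫₀ᵗ s^{-1/2} ω(y(s)) ds`, then `y ≡ 0`. -/
theorem osgood_vanishing_weighted (m : ℝ) (hm : 0 < m) (T K : ℝ) (hT : 0 < T)
    (hK : 0 ≤ K) (y : ℝ → ℝ)
    (hc : ContinuousOn y (Set.Icc 0 T))
    (hnn : ∀ t ∈ Set.Icc 0 T, 0 ≤ y t)
    (hineq : ∀ t ∈ Set.Icc 0 T,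
      y t ≤ K * ∫ s in (0:ℝ)..t, (Real.sqrt s)⁻¹ * omega m (y s)) :
    ∀ t ∈ Set.Icc 0 T, y t = 0 :=
  osgood_vanishing_weighted_general m hm T K hK y hc hnn hineq

end
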